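/- arXiv:2210.00359 — 2 statements merged into one kernel-verified Lean document; each statement's English description precedes it below -/
import Mathlib

section
/- Riccati-type contraction inequality for the UKF Lyapunov argument. Let A ∈ ℝ^{n×n} be nonsingular with ‖A‖ ≤ ā, let Σ ∈ ℝ^{n×n} be symmetric positive definite with Σ ⪯ σ̄·I, and let Q̂ ∈ ℝ^{n×n} be symmetric with Q̂ ⪰ q̂·I for some q̂ > 0. Define Σ' = A Σ Aᵀ + Q̂. Then Σ' is positive definite and, with λ := q̂/(q̂ + ā²·σ̄) ∈ (0, 1), the contraction inequality Aᵀ (Σ')^{-1} A ⪯ (1 − λ)·Σ^{-1} holds. -/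
open Matrix Finset

noncomputable section

/-- Spectral norm of a real matrix (operator norm w.r.t. Euclidean norms). -/
def specNorm {m n : ℕ} (A : Matrix (Fin m) (Fin n) ℝ) : ℝ :=
  ‖LinearMap.toContinuousLinearMap (Matrix.toEuclideanLin A)‖

/-- Loewner order `A ⪯ B`: `B - A` is positive semidefinite. -/
def psdLE {n : ℕ} (A B : Matrix (Fin n) (Fin n) ℝ) : Prop := (B - A).PosSemidef

/-!
Write `S = A Σ Aᵀ`. From `‖A‖ ≤ ā` and `Σ ⪯ σ̄ I` we get `S ⪯ ā² σ̄ I ⪯ (ā² σ̄ / q̂) Q̂`, i.e.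
`(1 + q̂ / (ā² σ̄)) S ⪯ S + Q̂`. Inversion is antitone on positive definite matrices, so
`(S + Q̂)⁻¹ ⪯ (1 - λ) S⁻¹`, and conjugating by `A` turns `Aᵀ S⁻¹ A` into `Σ⁻¹`.
-/

open scoped MatrixOrder Matrix.Norms.L2Operator ComplexOrder

namespace Matrix

/-- Both Schur complements of `[[N, 1], [1, M⁻¹]]` decide its positive semidefiniteness, and they
are `M⁻¹ - N⁻¹` and `N - M`. -/
theorem PosDef.posSemidef_inv_sub_inv {n K : Type*} [Fintype n] [DecidableEq n] [Field K]
    [PartialOrder K] [StarRing K] [StarOrderedRing K] {M N : Matrix n n K} (hM : M.PosDef)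
    (hMN : (N - M).PosSemidef) : (M⁻¹ - N⁻¹).PosSemidef := by
  have hN : N.PosDef := by simpa using hM.add_posSemidef hMN
  let _ := hN.isUnit.invertible
  let _ := hM.inv.isUnit.invertible
  have hschur₁₁ := PosDef.fromBlocks₁₁ (1 : Matrix n n K) M⁻¹ hN
  have hschur₂₂ := PosDef.fromBlocks₂₂ N (1 : Matrix n n K) hM.inv
  rw [conjTranspose_one, Matrix.one_mul, Matrix.mul_one] at hschur₁₁ hschur₂₂
  rwa [← hschur₁₁, hschur₂₂, nonsing_inv_nonsing_inv _ ((isUnit_iff_isUnit_det M).1 hM.isUnit)]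

variable {m n 𝕜 : Type*} [Fintype m] [Fintype n] [RCLike 𝕜]

lemma star_dotProduct_self_eq_norm_sq (x : n → 𝕜) :
    star x ⬝ᵥ x = ((‖WithLp.toLp 2 x‖ ^ 2 : ℝ) : 𝕜) := by
  rw [dotProduct_comm, ← EuclideanSpace.inner_toLp_toLp, inner_self_eq_norm_sq_to_K]
  push_cast
  rfl

variable [DecidableEq m] [DecidableEq n]

lemma mul_conjTranspose_le_norm_sq_smul_one (A : Matrix m n 𝕜) :
    A * Aᴴ ≤ (‖A‖ ^ 2) • (1 : Matrix m m 𝕜) := by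
  refine PosSemidef.of_dotProduct_mulVec_nonneg
    ((isHermitian_one.smul (IsSelfAdjoint.all _)).sub (isHermitian_mul_conjTranspose_self A))
    fun x => ?_
  have hbound := l2_opNorm_mulVec Aᴴ (WithLp.toLp 2 x)
  rw [l2_opNorm_conjTranspose] at hbound
  have hquad : star x ⬝ᵥ ((‖A‖ ^ 2 • (1 : Matrix m m 𝕜) - A * Aᴴ) *ᵥ x)
      = ((‖A‖ ^ 2 * ‖WithLp.toLp 2 x‖ ^ 2 - ‖WithLp.toLp 2 (Aᴴ *ᵥ x)‖ ^ 2 : ℝ) : 𝕜) := by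
    have hstar : star x ᵥ* A = star (Aᴴ *ᵥ x) := by
      rw [star_mulVec, conjTranspose_conjTranspose]
    rw [sub_mulVec, dotProduct_sub, smul_mulVec, one_mulVec, dotProduct_smul, ← mulVec_mulVec,
      dotProduct_mulVec, hstar, star_dotProduct_self_eq_norm_sq, star_dotProduct_self_eq_norm_sq]
    push_cast
    simp [RCLike.real_smul_eq_coe_mul]
  rw [hquad, RCLike.ofReal_nonneg, sub_nonneg, ← mul_pow]
  exact pow_le_pow_left₀ (norm_nonneg _) hbound 2

lemma mul_mul_conjTranspose_le_smul_one {M : Matrix n n 𝕜} {s : ℝ} (hs : 0 ≤ s) (hM : M ≤ s • 1)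
    (A : Matrix n n 𝕜) : A * M * Aᴴ ≤ (‖A‖ ^ 2 * s) • 1 :=
  calc A * M * Aᴴ ≤ A * (s • 1) * Aᴴ := star_right_conjugate_le_conjugate hM A
    _ = s • (A * Aᴴ) := by simp
    _ ≤ s • (‖A‖ ^ 2 • 1) :=
      smul_le_smul_of_nonneg_left (mul_conjTranspose_le_norm_sq_smul_one A) hs
    _ = (‖A‖ ^ 2 * s) • 1 := by rw [smul_smul, mul_comm]

lemma inv_smul_of_isUnit {M : Matrix n n 𝕜} (hM : IsUnit M) {t : ℝ} (ht : t ≠ 0) :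
    (t • M)⁻¹ = t⁻¹ • M⁻¹ := by
  refine inv_eq_left_inv ?_
  rw [smul_mul_smul_comm, inv_mul_cancel₀ ht,
    nonsing_inv_mul _ ((isUnit_iff_isUnit_det M).1 hM), one_smul]

lemma conjTranspose_mul_inv_conj_mul {A : Matrix n n 𝕜} (hA : IsUnit A) (M : Matrix n n 𝕜) :
    Aᴴ * (A * M * Aᴴ)⁻¹ * A = M⁻¹ := by
  have hAdet : IsUnit A.det := (isUnit_iff_isUnit_det A).1 hA
  have hAHdet : IsUnit Aᴴ.det := by
    rw [det_conjTranspose]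
    exact hAdet.star
  rw [mul_inv_rev, mul_inv_rev, ← Matrix.mul_assoc, ← Matrix.mul_assoc, mul_nonsing_inv _ hAHdet,
    Matrix.one_mul, Matrix.mul_assoc, nonsing_inv_mul _ hAdet, Matrix.mul_one]

lemma PosDef.pos_of_le_smul_one [Nonempty n] {M : Matrix n n 𝕜} (hM : M.PosDef) {s : ℝ}
    (h : M ≤ s • 1) : 0 < s := by
  by_contra! hs
  have hM0 : M = 0 :=
    le_antisymm (h.trans (smul_nonpos_of_nonpos_of_nonneg hs zero_le_one)) hM.posSemidef.nonneg
  exact not_isUnit_zero (hM0 ▸ hM.isUnit)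

lemma PosDef.inv_add_le_smul_inv {S Q : Matrix n n 𝕜} (hS : S.PosDef) {c q : ℝ} (hc : 0 < c)
    (hq : 0 < q) (hSc : S ≤ c • 1) (hQ : q • 1 ≤ Q) : (S + Q)⁻¹ ≤ (c / (q + c)) • S⁻¹ := by
  have hscaled : ((q + c) / c) • S ≤ S + Q :=
    calc ((q + c) / c) • S = S + (q / c) • S := by
          rw [add_div, div_self hc.ne', add_smul, one_smul, add_comm]
      _ ≤ S + (q / c) • (c • 1) := by gcongr
      _ = S + q • 1 := by rw [smul_smul, div_mul_cancel₀ _ hc.ne']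
      _ ≤ S + Q := by gcongr
  calc (S + Q)⁻¹ ≤ (((q + c) / c) • S)⁻¹ :=
        (hS.smul (by positivity)).posSemidef_inv_sub_inv hscaled
    _ = (c / (q + c)) • S⁻¹ := by rw [inv_smul_of_isUnit hS.isUnit (by positivity), inv_div]

end Matrix

theorem riccati_contraction_inequality_general
    {n : ℕ} (hn : 0 < n) (A Cov Qhat : Matrix (Fin n) (Fin n) ℝ) (abar qhat sbar : ℝ)
    (    hA : IsUnit A) (hAbound : specNorm A ≤ abar)
    (hCov : Cov.PosDef) (hCovbound : psdLE Cov (sbar • 1))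
    (hQhat : psdLE (qhat • 1) Qhat) (hqhat : 0 < qhat) :
    (A * Cov * Aᵀ + Qhat).PosDef ∧
    0 < qhat / (qhat + abar ^ 2 * sbar) ∧ qhat / (qhat + abar ^ 2 * sbar) < 1 ∧
    psdLE (Aᵀ * (A * Cov * Aᵀ + Qhat)⁻¹ * A)
      ((1 - qhat / (qhat + abar ^ 2 * sbar)) • Cov⁻¹) := by
  have : Nonempty (Fin n) := ⟨⟨0, hn⟩⟩
  -- `specNorm` is the L2 operator norm and `psdLE` the Loewner order `≤`, both definitionally.
  have hAbound : ‖A‖ ≤ abar := hAbound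
  have hsbar : 0 < sbar := hCov.pos_of_le_smul_one hCovbound
  have habar : 0 < abar := (norm_pos_iff.2 hA.ne_zero).trans_le hAbound
  have hS : A * Cov * Aᴴ ≤ (abar ^ 2 * sbar) • 1 :=
    (mul_mul_conjTranspose_le_smul_one hsbar.le hCovbound A).trans (by gcongr)
  have hSpd : (A * Cov * Aᴴ).PosDef := (IsUnit.posDef_star_right_conjugate_iff hA).2 hCov
  have hQpsd : Qhat.PosSemidef :=
    nonneg_iff_posSemidef.1 ((smul_nonneg hqhat.le zero_le_one).trans hQhat)
  set c := abar ^ 2 * sbar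
  have hc : 0 < c := by positivity
  have hcoeff : 1 - qhat / (qhat + c) = c / (qhat + c) := by
    field_simp
    ring
  rw [← conjTranspose_eq_transpose_of_trivial]
  refine ⟨hSpd.add_posSemidef hQpsd, by positivity, (div_lt_one (by positivity)).2 (by linarith), ?_⟩
  rw [hcoeff, ← conjTranspose_mul_inv_conj_mul hA Cov, ← Matrix.smul_mul, ← Matrix.mul_smul]
  exact star_left_conjugate_le_conjugate (hSpd.inv_add_le_smul_inv hc hqhat hS hQhat) A

/-- **Riccati-type contraction inequality for the UKF Lyapunov argument.**  For `A`
nonsingular with `‖A‖ ≤ ā`, `Σ` symmetric positive definite with `Σ ⪯ σ̄ I`, and `Q̂`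
symmetric with `Q̂ ⪰ q̂ I`, `q̂ > 0`, the matrix `Σ' = A Σ Aᵀ + Q̂` is positive definite
and, with `λ = q̂/(q̂ + ā² σ̄) ∈ (0,1)`, we have `Aᵀ (Σ')⁻¹ A ⪯ (1 − λ) Σ⁻¹`. -/
theorem riccati_contraction_inequality
    {n : ℕ} (hn : 0 < n) (A Cov Qhat : Matrix (Fin n) (Fin n) ℝ) (abar qhat sbar : ℝ)
    (    hA : IsUnit A) (hAbound : specNorm A ≤ abar)
    (hCov : Cov.PosDef) (hCovbound : psdLE Cov (sbar • 1))
    (hQhatsym : Qhat.IsHermitian) (hQhat : psdLE (qhat • 1) Qhat) (hqhat : 0 < qhat) :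
    (A * Cov * Aᵀ + Qhat).PosDef ∧
    0 < qhat / (qhat + abar ^ 2 * sbar) ∧ qhat / (qhat + abar ^ 2 * sbar) < 1 ∧
    psdLE (Aᵀ * (A * Cov * Aᵀ + Qhat)⁻¹ * A)
      ((1 - qhat / (qhat + abar ^ 2 * sbar)) • Cov⁻¹) :=
  riccati_contraction_inequality_general hn A Cov Qhat abar qhat sbar hA hAbound hCov hCovbound
    hQhat hqhat
end
end

section
/- Boundedness of the UKF predicted mean and predicted covariance under bounded dynamics (condition C6, time update). Suppose κ > 0 (so all sigma-point weights are positive), f : ℝⁿ → ℝⁿ satisfies ‖f(x)‖₂ ≤ δ_f for all x, and Q ⪯ q̄·I is a symmetric positive semidefinite process-noise covariance. Let x̃₀,…,x̃_{2n} with weights ω₀,…,ω_{2n} be the sigma points generated from any estimate x̂ and any positive semidefinite covariance Σ with factor √Σ. Then the UKF predicted mean x̂' = Σ_{i=0}^{2n} ωᵢ·f(x̃ᵢ) satisfies ‖x̂'‖₂ ≤ δ_f, and the predicted covariance Σ' = Σ_{i=0}^{2n} ωᵢ·f(x̃ᵢ)f(x̃ᵢ)ᵀ − x̂'(x̂')ᵀ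 + Q satisfies 0 ⪯ Σ' ⪯ (δ_f² + q̄)·I. -/
/-!
The predicted mean is a convex combination of the points `f(x̃ᵢ)`, all in the ball of radius
`δ_f`, so it stays in that ball. The sample part of the predicted covariance is the weighted
covariance `∑ ωᵢ yᵢ yᵢᵀ - ȳ ȳᵀ = ∑ ωᵢ (yᵢ - ȳ)(yᵢ - ȳ)ᵀ` of the points `yᵢ = f(x̃ᵢ)`, hence
`⪰ 0`; it is `⪯ ∑ ωᵢ yᵢ yᵢᵀ ⪯ δ_f² I` because `y yᵀ ⪯ ‖y‖² I` by Cauchy–Schwarz. Adding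
`0 ⪯ Q ⪯ q̄ I` gives the covariance bounds.
-/

open Matrix Finset

noncomputable section

/-- Euclidean (`l₂`) norm of a vector in `ℝⁿ`. -/
def norm2 {n : ℕ} (x : Fin n → ℝ) : ℝ := Real.sqrt (∑ j, x j ^ 2)

/-- UKF sigma-point weights: `ω₀ = κ/(n+κ)` and `ωᵢ = 1/(2(n+κ))` for `i = 1, …, 2n`. -/
def ukfWeight (n : ℕ) (κ : ℝ) : ℕ → ℝ :=
  fun i => if i = 0 then κ / ((n : ℝ) + κ) else 1 / (2 * ((n : ℝ) + κ))

/-- UKF sigma points generated from the estimate `xhat`, a square-root factor `S` of the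
covariance (so `Σ = S * Sᵀ`), and scaling parameter `κ`: `x̃₀ = x̂`,
`x̃ᵢ = x̂ + [√((n+κ)Σ)]_{(:,i)}` for `i = 1, …, n` and
`x̃_{n+i} = x̂ − [√((n+κ)Σ)]_{(:,i)}` for `i = 1, …, n`, where
`√((n+κ)Σ) = √(n+κ) • S` is the corresponding factor of `(n+κ)Σ`. -/
def ukfSigma {n : ℕ} (xhat : Fin n → ℝ) (S : Matrix (Fin n) (Fin n) ℝ) (κ : ℝ) :
    ℕ → (Fin n → ℝ) := fun i =>
  if h1 : 1 ≤ i ∧ i ≤ n then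
    xhat + Real.sqrt ((n : ℝ) + κ) • (fun j => S j ⟨i - 1, by omega⟩)
  else if h2 : n + 1 ≤ i ∧ i ≤ 2 * n then
    xhat - Real.sqrt ((n : ℝ) + κ) • (fun j => S j ⟨i - n - 1, by omega⟩)
  else xhat

open scoped MatrixOrder

theorem ukfWeight_nonneg {n : ℕ} {κ : ℝ} (hκ : 0 ≤ κ) (i : ℕ) : 0 ≤ ukfWeight n κ i := by
  unfold ukfWeight
  split_ifs <;> positivity

theorem sum_ukfWeight {n : ℕ} {κ : ℝ} (h : (n : ℝ) + κ ≠ 0) :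
    ∑ i ∈ range (2 * n + 1), ukfWeight n κ i = 1 := by
  simp only [sum_range_succ', ukfWeight, Nat.succ_ne_zero, if_false, if_true, sum_const,
    card_range, nsmul_eq_mul]
  field_simp
  push_cast
  ring

theorem norm2_eq_norm {n : ℕ} (x : Fin n → ℝ) : norm2 x = ‖WithLp.toLp 2 x‖ := by
  simp [norm2, EuclideanSpace.norm_eq]

theorem norm2_sq {n : ℕ} (x : Fin n → ℝ) : norm2 x ^ 2 = x ⬝ᵥ x := by
  rw [norm2, Real.sq_sqrt (by positivity)]
  simp [dotProduct, sq]

theorem convex_setOf_norm2_le {n : ℕ} (δ : ℝ) : Convex ℝ {x : Fin n → ℝ | norm2 x ≤ δ} := by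
  simpa [Set.preimage, norm2_eq_norm] using
    (convex_closedBall (0 : EuclideanSpace ℝ (Fin n)) δ).linear_preimage
      (WithLp.linearEquiv 2 ℝ (Fin n → ℝ)).symm.toLinearMap

section WeightedCov

variable {ι m : Type*} {s : Finset ι} {w : ι → ℝ}

theorem sum_mul_sub_mul_sub_eq {a b : ι → ℝ} (hw : ∑ i ∈ s, w i = 1) :
    ∑ i ∈ s, w i * ((a i - ∑ j ∈ s, w j * a j) * (b i - ∑ j ∈ s, w j * b j)) =
      ∑ i ∈ s, w i * (a i * b i) - (∑ i ∈ s, w i * a i) * ∑ i ∈ s, w i * b i := by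
  set ma := ∑ j ∈ s, w j * a j
  set mb := ∑ j ∈ s, w j * b j
  have expand : ∀ i ∈ s, w i * ((a i - ma) * (b i - mb)) =
      w i * (a i * b i) - mb * (w i * a i) - ma * (w i * b i) + ma * mb * w i :=
    fun i _ => by ring
  rw [sum_congr rfl expand, sum_add_distrib, sum_sub_distrib, sum_sub_distrib, ← mul_sum,
    ← mul_sum, ← mul_sum, hw]
  ring

variable (s w) in
def weightedCov (y : ι → m → ℝ) : Matrix m m ℝ :=
  ∑ i ∈ s, w i • vecMulVec (y i) (y i) - vecMulVec (∑ i ∈ s, w i • y i) (∑ i ∈ s, w i • y i)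

theorem weightedCov_eq_sum_smul_vecMulVec_sub (hw : ∑ i ∈ s, w i = 1) (y : ι → m → ℝ) :
    weightedCov s w y =
      ∑ i ∈ s, w i • vecMulVec (y i - ∑ j ∈ s, w j • y j) (y i - ∑ j ∈ s, w j • y j) := by
  ext j k
  simp only [weightedCov, Matrix.sub_apply, Matrix.sum_apply, Matrix.smul_apply, vecMulVec_apply,
    Finset.sum_apply, Pi.sub_apply, Pi.smul_apply, smul_eq_mul]
  exact (sum_mul_sub_mul_sub_eq hw).symm

variable [Fintype m]

theorem weightedCov_nonneg (hw0 : ∀ i ∈ s, 0 ≤ w i) (hw : ∑ i ∈ s, w i = 1)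
    (y : ι → m → ℝ) : 0 ≤ weightedCov s w y := by
  rw [weightedCov_eq_sum_smul_vecMulVec_sub hw]
  exact (posSemidef_sum s fun i hi =>
    (posSemidef_vecMulVec_self_star (y i - ∑ j ∈ s, w j • y j)).smul (hw0 i hi)).nonneg

variable [DecidableEq m]

theorem vecMulVec_self_le_smul_one {y : m → ℝ} {c : ℝ} (hy : y ⬝ᵥ y ≤ c) :
    vecMulVec y y ≤ c • (1 : Matrix m m ℝ) := by
  refine PosSemidef.of_dotProduct_mulVec_nonneg ?_ fun v => ?_
  · exact (isHermitian_one.smul (IsSelfAdjoint.all c)).sub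
      (by simpa using (posSemidef_vecMulVec_self_star y).isHermitian)
  · have hquad : star v ⬝ᵥ (c • 1 - vecMulVec y y) *ᵥ v = c * (v ⬝ᵥ v) - (y ⬝ᵥ v) ^ 2 := by
      simp [sub_mulVec, smul_mulVec, vecMulVec_mulVec, dotProduct_comm v y, sq]
    have cauchySchwarz : (y ⬝ᵥ v) ^ 2 ≤ (y ⬝ᵥ y) * (v ⬝ᵥ v) := by
      simpa only [dotProduct, sq] using sum_mul_sq_le_sq_mul_sq univ y v
    have hv : 0 ≤ v ⬝ᵥ v := by simpa using dotProduct_self_star_nonneg v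
    rw [hquad, sub_nonneg]
    exact cauchySchwarz.trans (mul_le_mul_of_nonneg_right hy hv)

theorem weightedCov_le_smul_one (hw0 : ∀ i ∈ s, 0 ≤ w i) (hw : ∑ i ∈ s, w i = 1)
    {y : ι → m → ℝ} {c : ℝ} (hy : ∀ i ∈ s, y i ⬝ᵥ y i ≤ c) : weightedCov s w y ≤ c • 1 :=
  calc weightedCov s w y ≤ ∑ i ∈ s, w i • vecMulVec (y i) (y i) :=
        sub_le_self _ (posSemidef_vecMulVec_self_star _).nonneg
    _ ≤ ∑ i ∈ s, w i • c • (1 : Matrix m m ℝ) := sum_le_sum fun i hi =>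
        smul_le_smul_of_nonneg_left (vecMulVec_self_le_smul_one (hy i hi)) (hw0 i hi)
    _ = c • 1 := by rw [← sum_smul, hw, one_smul]

end WeightedCov

theorem UKF_time_update_bounded_general
    {n : ℕ} (f : (Fin n → ℝ) → (Fin n → ℝ)) (δf qbar κ : ℝ)
    (xhat xp : Fin n → ℝ) (S Q Covp : Matrix (Fin n) (Fin n) ℝ)
    (hκ : 0 < κ)
    (hf : ∀ x, norm2 (f x) ≤ δf)
    (hQ : Q.PosSemidef) (hQbar : psdLE Q (qbar • 1))
    (hxp : xp = ∑ i ∈ Finset.range (2 * n + 1), ukfWeight n κ i • f (ukfSigma xhat S κ i))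
    (hCovp : Covp = (∑ i ∈ Finset.range (2 * n + 1),
        ukfWeight n κ i • vecMulVec (f (ukfSigma xhat S κ i)) (f (ukfSigma xhat S κ i)))
      - vecMulVec xp xp + Q) :
    norm2 xp ≤ δf ∧ Covp.PosSemidef ∧ psdLE Covp ((δf ^ 2 + qbar) • 1) := by
  subst hxp hCovp
  have hw0 : ∀ i ∈ range (2 * n + 1), 0 ≤ ukfWeight n κ i := fun i _ => ukfWeight_nonneg hκ.le i
  have hw : ∑ i ∈ range (2 * n + 1), ukfWeight n κ i = 1 := sum_ukfWeight (by positivity)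
  have hy : ∀ i ∈ range (2 * n + 1),
      f (ukfSigma xhat S κ i) ⬝ᵥ f (ukfSigma xhat S κ i) ≤ δf ^ 2 := fun i _ => by
    rw [← norm2_sq]
    exact pow_le_pow_left₀ (Real.sqrt_nonneg _) (hf _) 2
  refine ⟨(convex_setOf_norm2_le δf).sum_mem hw0 hw fun i _ => hf _, ?_, ?_⟩
  · exact (weightedCov_nonneg hw0 hw _).posSemidef.add hQ
  · -- `psdLE A B` is definitionally `A ≤ B` in the `MatrixOrder` Loewner order.
    change weightedCov _ _ _ + Q ≤ _
    rw [add_smul]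
    exact add_le_add (weightedCov_le_smul_one hw0 hw hy) hQbar

/-- **Boundedness of the UKF predicted mean and predicted covariance under bounded dynamics
(condition C6, time update).**  If `κ > 0` (so all sigma-point weights are positive),
`‖f(x)‖₂ ≤ δ_f` for all `x`, and `Q ⪯ q̄ I` is positive semidefinite, then for sigma points
generated from any estimate `x̂` and any positive semidefinite `Σ = S Sᵀ`, the predicted
mean `x̂' = ∑ᵢ ωᵢ f(x̃ᵢ)` satisfies `‖x̂'‖₂ ≤ δ_f` and the predicted covariance
`Σ' = ∑ᵢ ωᵢ f(x̃ᵢ) f(x̃ᵢ)ᵀ − x̂' x̂'ᵀ + Q` satisfies `0 ⪯ Σ' ⪯ (δ_f² + q̄) I`. -/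
theorem UKF_time_update_bounded
    {n : ℕ} (f : (Fin n → ℝ) → (Fin n → ℝ)) (δf qbar κ : ℝ)
    (xhat xp : Fin n → ℝ) (Cov S Q Covp : Matrix (Fin n) (Fin n) ℝ)
    (hκ : 0 < κ)
    (hf : ∀ x, norm2 (f x) ≤ δf)
    (hQ : Q.PosSemidef) (hQbar : psdLE Q (qbar • 1))
    (hCov : Cov.PosSemidef) (hfac : Cov = S * Sᵀ)
    (hxp : xp = ∑ i ∈ Finset.range (2 * n + 1), ukfWeight n κ i • f (ukfSigma xhat S κ i))
    (hCovp : Covp = (∑ i ∈ Finset.range (2 * n + 1),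
        ukfWeight n κ i • vecMulVec (f (ukfSigma xhat S κ i)) (f (ukfSigma xhat S κ i)))
      - vecMulVec xp xp + Q) :
    norm2 xp ≤ δf ∧ Covp.PosSemidef ∧ psdLE Covp ((δf ^ 2 + qbar) • 1) :=
  UKF_time_update_bounded_general f δf qbar κ xhat xp S Q Covp hκ hf hQ hQbar hxp hCovp
end
end
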